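/- arXiv:0901.3691 — 2 statements merged into one kernel-verified Lean document; each statement's English description precedes it below -/
import Mathlib

section
/- For any positive integer n > 1 and positive integers a, b with gcd(a, b) = 1, and any prime p dividing (a+b)(a+2b)···(a+nb), the inequality v_p((a+b)(a+2b)···(a+nb)) ≥ v_p(n!) holds. -/
/-!
Since `p ∤ b`, the integer `b` is invertible modulo `M = p ^ v_p(n!)`, so with `c ≡ a b⁻¹ (mod M)`
we get `∏ (a + b i) ≡ bⁿ ∏ (c + i) (mod M)`. A product of `n` consecutive integers is divisible
by `n!`, hence by `M`, so `M` divides `∏ (a + b i)` as well.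
-/

open Finset Nat

theorem Nat.factorial_dvd_prod_Icc_add (c n : ℕ) : n ! ∣ ∏ i ∈ Icc 1 n, (c + i) := by
  have h : ∏ i ∈ Icc 1 n, (c + i) = (c + 1).ascFactorial n := by
    rw [ascFactorial_eq_prod_range, ← Ico_add_one_right_eq_Icc, prod_Ico_eq_prod_range]
    simp only [add_tsub_cancel_right, add_assoc, add_comm 1]
  exact h ▸ factorial_dvd_ascFactorial (c + 1) n

theorem dvd_prod_Icc_add_mul_of_dvd_factorial {m a b n : ℕ} (hb : b.Coprime m)
    (hm : m ∣ n !) : m ∣ ∏ i ∈ Icc 1 n, (a + b * i) := by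
  have : NeZero m := ⟨fun h => factorial_ne_zero n (Nat.eq_zero_of_zero_dvd (h ▸ hm))⟩
  set u := ZMod.unitOfCoprime b hb
  set c : ℕ := ((a : ZMod m) * ↑u⁻¹).val
  have hterm (i : ℕ) : ((a + b * i : ℕ) : ZMod m) = b * ((c + i : ℕ) : ZMod m) := by
    have hbc : (b : ZMod m) * c = a := by
      rw [ZMod.natCast_zmod_val, mul_left_comm, ← ZMod.coe_unitOfCoprime b hb, Units.mul_inv,
        mul_one]
    push_cast
    rw [mul_add, hbc]
  have hconsec : ∏ i ∈ Icc 1 n, ((c + i : ℕ) : ZMod m) = 0 := by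
    rw [← Nat.cast_prod, ZMod.natCast_eq_zero_iff]
    exact hm.trans (factorial_dvd_prod_Icc_add c n)
  rw [← ZMod.natCast_eq_zero_iff, Nat.cast_prod, prod_congr rfl fun i _ => hterm i,
    prod_mul_distrib, hconsec, mul_zero]

theorem padicValNat_factorial_le_padicValNat_prod_Icc_add_mul {p a b : ℕ} [Fact p.Prime]
    (hpb : ¬p ∣ b) (n : ℕ) :
    padicValNat p n ! ≤ padicValNat p (∏ i ∈ Icc 1 n, (a + b * i)) := by
  have hb : b ≠ 0 := by rintro rfl; exact hpb (dvd_zero p)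
  have hprod : ∏ i ∈ Icc 1 n, (a + b * i) ≠ 0 :=
    prod_ne_zero_iff.mpr fun i hi => by have := (mem_Icc.mp hi).1; positivity
  have hcop : b.Coprime (p ^ padicValNat p n !) :=
    ((Nat.Prime.coprime_iff_not_dvd Fact.out).mpr hpb).symm.pow_right _
  exact (padicValNat_dvd_iff_le hprod).mp
    (dvd_prod_Icc_add_mul_of_dvd_factorial hcop pow_padicValNat_dvd)

theorem Nat.Prime.not_dvd_right_of_dvd_prod_Icc_add_mul {p a b n : ℕ} (hp : p.Prime)
    (hab : Nat.gcd a b = 1) (hpd : p ∣ ∏ i ∈ Icc 1 n, (a + b * i)) : ¬p ∣ b := by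
  intro hpb
  obtain ⟨i, -, hpi⟩ := hp.prime.exists_mem_finset_dvd hpd
  have hpa : p ∣ a := (Nat.dvd_add_left (hpb.mul_right i)).mp hpi
  exact hp.not_dvd_one (hab ▸ Nat.dvd_gcd hpa hpb)

theorem stmt7_general (n a b : ℕ)
    (hab : Nat.gcd a b = 1)
    (p : ℕ) (hp : p.Prime) (hpd : p ∣ ∏ i ∈ Finset.Icc 1 n, (a + b * i)) :
    padicValNat p n.factorial ≤
      padicValNat p (∏ i ∈ Finset.Icc 1 n, (a + b * i)) :=
  have : Fact p.Prime := ⟨hp⟩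
  padicValNat_factorial_le_padicValNat_prod_Icc_add_mul
    (hp.not_dvd_right_of_dvd_prod_Icc_add_mul hab hpd) n

theorem stmt7 (n a b : ℕ) (hn : 1 < n) (ha : 0 < a) (hb : 0 < b)
    (hab : Nat.gcd a b = 1)
    (p : ℕ) (hp : p.Prime) (hpd : p ∣ ∏ i ∈ Finset.Icc 1 n, (a + b * i)) :
    padicValNat p n.factorial ≤
      padicValNat p (∏ i ∈ Finset.Icc 1 n, (a + b * i)) :=
  stmt7_general n a b hab p hp hpd
end

section
/- For any positive integers n, a, b with gcd(a, b) = 1 and gcd(n!, b) = 1, and for each prime p ≤ n, there exists an index 1 ≤ r ≤ n with v_p(a + b·r) = max_{1 ≤ i ≤ n} v_p(a + b·i), and removing this term still leaves enough p-divisibility: v_p(∏_{i=1}^n (a+b·i)) - v_p(a + b·r) ≥ v_p(n!) - max_{1 ≤ i ≤ n} v_p(a+b·i). -/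
/-!
Since `b` is invertible modulo `n!`, the product `∏ (a + b i)` is congruent modulo `n!` to
`b ^ n ∏ (c + i)` with `c ≡ a / b`, and `∏_{i=1}^n (c + i) = n! * (c + n).choose n`. So `n!`
divides the product, whence `v_p(n!) ≤ v_p(∏ (a + b i))` for every prime `p`; subtracting the
maximum, attained at some `r`, from both sides gives the inequality.
-/

open Finset Nat

theorem padicValNat_le_of_dvd {p x y : ℕ} [Fact p.Prime] (hy : y ≠ 0) (h : x ∣ y) :
    padicValNat p x ≤ padicValNat p y :=
  (padicValNat_dvd_iff_le hy).1 (pow_padicValNat_dvd.trans h)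

theorem prod_Icc_one_add_eq_ascFactorial (c n : ℕ) :
    ∏ i ∈ Icc 1 n, (c + i) = (c + 1).ascFactorial n := by
  rw [← Ico_add_one_right_eq_Icc, prod_Ico_eq_prod_range, ascFactorial_eq_prod_range]
  simp only [add_tsub_cancel_right, add_assoc, add_comm 1]

theorem factorial_dvd_prod_Icc_add_mul (a b n : ℕ) (hb : Nat.Coprime b n !) :
    n ! ∣ ∏ i ∈ Icc 1 n, (a + b * i) := by
  have : NeZero n ! := ⟨(factorial_pos n).ne'⟩
  set c := ((a : ZMod n !) * (b : ZMod n !)⁻¹).val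
  have hbc : ∀ i : ℕ, ((a + b * i : ℕ) : ZMod n !) = b * ((c + i : ℕ) : ZMod n !) := by
    intro i
    push_cast
    rw [ZMod.natCast_zmod_val]
    linear_combination -(a : ZMod n !) * ZMod.coe_mul_inv_eq_one b hb
  rw [← ZMod.natCast_eq_zero_iff, Nat.cast_prod, prod_congr rfl fun i _ => hbc i,
    prod_mul_distrib]
  refine mul_eq_zero_of_right _ ?_
  rw [← Nat.cast_prod, prod_Icc_one_add_eq_ascFactorial, ZMod.natCast_eq_zero_iff]
  exact factorial_dvd_ascFactorial _ _

theorem stmt17_general (n a b : ℕ) (hn : 0 < n) (ha : 0 < a)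
    (hnb : Nat.gcd n.factorial b = 1)
    (p : ℕ) (hp : p.Prime) :
    ∃ r ∈ Finset.Icc 1 n,
      padicValNat p (a + b * r) =
        (Finset.Icc 1 n).sup (fun i => padicValNat p (a + b * i)) ∧
      padicValNat p n.factorial -
          (Finset.Icc 1 n).sup (fun i => padicValNat p (a + b * i)) ≤
        padicValNat p (∏ i ∈ Finset.Icc 1 n, (a + b * i)) -
          padicValNat p (a + b * r) := by
  have : Fact p.Prime := ⟨hp⟩
  obtain ⟨r, hr, hmax⟩ := exists_mem_eq_sup (Icc 1 n) ⟨1, mem_Icc.2 ⟨le_rfl, hn⟩⟩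
    fun i => padicValNat p (a + b * i)
  refine ⟨r, hr, hmax.symm, ?_⟩
  have hprod : ∏ i ∈ Icc 1 n, (a + b * i) ≠ 0 := prod_ne_zero_iff.2 fun i _ => by omega
  have hdvd := factorial_dvd_prod_Icc_add_mul a b n (Nat.coprime_comm.1 hnb)
  rw [← hmax]
  exact Nat.sub_le_sub_right (padicValNat_le_of_dvd hprod hdvd) _

theorem stmt17 (n a b : ℕ) (hn : 0 < n) (ha : 0 < a) (hb : 0 < b)
    (hab : Nat.gcd a b = 1) (hnb : Nat.gcd n.factorial b = 1)
    (p : ℕ) (hp : p.Prime) (hpn : p ≤ n) :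
    ∃ r ∈ Finset.Icc 1 n,
      padicValNat p (a + b * r) =
        (Finset.Icc 1 n).sup (fun i => padicValNat p (a + b * i)) ∧
      padicValNat p n.factorial -
          (Finset.Icc 1 n).sup (fun i => padicValNat p (a + b * i)) ≤
        padicValNat p (∏ i ∈ Finset.Icc 1 n, (a + b * i)) -
          padicValNat p (a + b * r) :=
  stmt17_general n a b hn ha hnb p hp
end
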